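/- Let E₀ > 0, Q₀ > 0, p_max > 0, and K_max = 1/ln 2. If Q₀/E₀ ≥ K_max, then no admissible power schedule p : [0,T] → [0, p_max], T < ∞, satisfies ∫₀^T log₂(1+p(τ))dτ = Q₀ and ∫₀^T p(τ)dτ ≤ E₀. -/

import Mathlib

/-!
Since `log (1 + x) ≤ x` with equality only at `x = 0`, the data sent is at most the energy spent
divided by `ln 2`, strictly so unless the schedule vanishes almost everywhere, in which case
nothing is sent. Energy scarcity thus gives `Q₀ < E₀ / ln 2 ≤ Q₀`.
-/

open MeasureTheory

namespace Real

theorem logb_one_add_lt_div_log {b x : ℝ} (hb : 1 < b) (hx : -1 < x) (hx0 : x ≠ 0) :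
    logb b (1 + x) < x / log b := by
  rw [logb, div_lt_div_iff_of_pos_right (log_pos hb)]
  have := log_lt_sub_one_of_pos (by linarith : 0 < 1 + x) (by simpa using hx0)
  linarith

theorem logb_one_add_le_div_log {b x : ℝ} (hb : 1 < b) (hx : -1 < x) :
    logb b (1 + x) ≤ x / log b := by
  rcases eq_or_ne x 0 with rfl | hx0
  · simp
  · exact (logb_one_add_lt_div_log hb hx hx0).le

theorem logb_one_add_eq_div_log_iff {b x : ℝ} (hb : 1 < b) (hx : -1 < x) :
    logb b (1 + x) = x / log b ↔ x = 0 := by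
  refine ⟨fun h => ?_, fun h => by simp [h]⟩
  by_contra hx0
  exact (logb_one_add_lt_div_log hb hx hx0).ne h

end Real

open Real

section Capacity

variable {α : Type*} [MeasurableSpace α] {μ : Measure α} {b : ℝ} {p : α → ℝ}

theorem MeasureTheory.Integrable.logb_one_add (hb : 1 < b) (hp : Integrable p μ)
    (hp0 : ∀ᵐ t ∂μ, 0 ≤ p t) : Integrable (fun t => logb b (1 + p t)) μ := by
  refine (hp.div_const (log b)).mono' ?_ ?_
  · exact ((measurable_log.comp_aemeasurable (aemeasurable_const.add hp.aemeasurable)).div_const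
      (log b)).aestronglyMeasurable
  · filter_upwards [hp0] with t ht
    rw [norm_of_nonneg (logb_nonneg hb (by linarith))]
    exact logb_one_add_le_div_log hb (by linarith)

theorem integral_logb_one_add_lt (hb : 1 < b) (hp : Integrable p μ) (hp0 : ∀ᵐ t ∂μ, 0 ≤ p t)
    (hp_ne : ¬ p =ᵐ[μ] 0) : ∫ t, logb b (1 + p t) ∂μ < (∫ t, p t ∂μ) / log b := by
  have hle : (fun t => logb b (1 + p t)) ≤ᵐ[μ] fun t => p t / log b := by
    filter_upwards [hp0] with t ht
    exact logb_one_add_le_div_log hb (by linarith)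
  rw [← integral_div]
  refine lt_of_le_of_ne (integral_mono_ae (hp.logb_one_add hb hp0) (hp.div_const _) hle) ?_
  intro heq
  have hae := (integral_eq_iff_of_ae_le (hp.logb_one_add hb hp0) (hp.div_const _) hle).mp heq
  refine hp_ne ?_
  filter_upwards [hp0, hae] with t ht hteq
  exact (logb_one_add_eq_div_log_iff hb (by linarith)).mp hteq

end Capacity

theorem energy_scarce_infeasible_general (E₀ Q₀ pmax : ℝ)
    (hE₀ : 0 < E₀) (hQ₀ : 0 < Q₀)
    (hscarce : Q₀ / E₀ ≥ 1 / Real.log 2) :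
    ¬ ∃ T : ℝ, 0 ≤ T ∧ ∃ p : ℝ → ℝ,
        (∀ t ∈ Set.Icc 0 T, p t ∈ Set.Icc 0 pmax) ∧
        IntegrableOn p (Set.Icc 0 T) ∧
        (∫ t in Set.Icc 0 T, Real.logb 2 (1 + p t)) = Q₀ ∧
        (∫ t in Set.Icc 0 T, p t) ≤ E₀ := by
  rintro ⟨T, -, p, hp_range, hp_int, hQ, hE⟩
  have hlog2 : 0 < log 2 := log_pos one_lt_two
  have hp0 : ∀ᵐ t ∂volume.restrict (Set.Icc 0 T), 0 ≤ p t :=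
    (ae_restrict_mem measurableSet_Icc).mono fun t ht => (hp_range t ht).1
  have hp_ne : ¬ p =ᵐ[volume.restrict (Set.Icc 0 T)] 0 := fun hp_zero => by
    have : (fun t => logb 2 (1 + p t)) =ᵐ[volume.restrict (Set.Icc 0 T)] 0 := by
      filter_upwards [hp_zero] with t ht
      simp [ht]
    rw [integral_congr_ae this] at hQ
    simp only [Pi.zero_apply, integral_zero] at hQ
    exact hQ₀.ne hQ
  have hE_le_Q : E₀ / log 2 ≤ Q₀ := by
    rw [ge_iff_le, div_le_div_iff₀ hlog2 hE₀] at hscarce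
    rw [div_le_iff₀ hlog2]
    linarith
  have := calc
    Q₀ = ∫ t in Set.Icc 0 T, logb 2 (1 + p t) := hQ.symm
    _ < (∫ t in Set.Icc 0 T, p t) / log 2 := integral_logb_one_add_lt one_lt_two hp_int hp0 hp_ne
    _ ≤ E₀ / log 2 := div_le_div_of_nonneg_right hE hlog2.le
    _ ≤ Q₀ := hE_le_Q
  exact lt_irrefl _ this

/-- Energy-scarce case: if Q₀/E₀ ≥ K_max = 1/ln 2, then no admissible power
schedule p : [0,T] → [0, p_max] clears the queue Q₀ using at most energy E₀. -/
theorem energy_scarce_infeasible (E₀ Q₀ pmax : ℝ)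
    (hE₀ : 0 < E₀) (hQ₀ : 0 < Q₀) (hpmax : 0 < pmax)
    (hscarce : Q₀ / E₀ ≥ 1 / Real.log 2) :
    ¬ ∃ T : ℝ, 0 ≤ T ∧ ∃ p : ℝ → ℝ,
        (∀ t ∈ Set.Icc 0 T, p t ∈ Set.Icc 0 pmax) ∧
        IntegrableOn p (Set.Icc 0 T) ∧
        (∫ t in Set.Icc 0 T, Real.logb 2 (1 + p t)) = Q₀ ∧
        (∫ t in Set.Icc 0 T, p t) ≤ E₀ :=
  energy_scarce_infeasible_general E₀ Q₀ pmax hE₀ hQ₀ hscarce
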